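/- Let τ ≥ 1 be an integer and let S ⊆ S' be finite sets of integers. Then for every integer t ≥ 0, F_τ^t(S) ⊆ F_τ^t(S'). In particular, if the pruning process starting from S' reaches the empty set after t rounds (F_τ^t(S') = ∅), then so does the pruning process starting from S (F_τ^t(S) = ∅). -/
import Mathlib


open scoped BigOperators

/-- Weight of `f` in `S`: the number of distinct 2-adic valuations of differences
of `f` with the other elements of `S`. -/
def wS (S : Finset ℤ) (f : ℤ) : ℕ :=
  ((S.erase f).image (fun g => padicValInt 2 (f - g))).card

/-- One pruning round with threshold `τ`: remove all elements of weight at most `τ`. -/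
def prune (τ : ℕ) (S : Finset ℤ) : Finset ℤ :=
  S.filter (fun f => τ < wS S f)

lemma wS_mono {S S' : Finset ℤ} (h : S ⊆ S') (f : ℤ) : wS S f ≤ wS S' f :=
  Finset.card_le_card (Finset.image_subset_image (Finset.erase_subset_erase _ h))

lemma prune_mono (τ : ℕ) {S S' : Finset ℤ} (h : S ⊆ S') : prune τ S ⊆ prune τ S' := by
  intro f hf
  simp only [prune, Finset.mem_filter] at hf ⊢
  exact ⟨h hf.1, lt_of_lt_of_le hf.2 (wS_mono h f)⟩

theorem stmt17 (τ : ℕ) (hτ : 1 ≤ τ) (S S' : Finset ℤ) (hSS : S ⊆ S') :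
    ∀ t : ℕ, (prune τ)^[t] S ⊆ (prune τ)^[t] S' ∧
      ((prune τ)^[t] S' = ∅ → (prune τ)^[t] S = ∅) := by
  intro t
  have hsub : (prune τ)^[t] S ⊆ (prune τ)^[t] S' := by
    induction t with
    | zero => simpa using hSS
    | succ n ih =>
      rw [Function.iterate_succ_apply', Function.iterate_succ_apply']
      exact prune_mono τ ih
  exact ⟨hsub, fun h => Finset.subset_empty.mp (h ▸ hsub)⟩
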